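/- Fix n ≥ 1 and let Q(λ) = A_n λⁿ + ⋯ + A_1 λ + A_0 be a random real polynomial whose n+1 coefficients A_0, …, A_n are i.i.d. standard normal random variables. Then for every k with 0 ≤ k ≤ n, P(N⁰(Q) = k) = P(N⁰(Q) = n − k), where N⁰(Q) is the number of complex roots of Q with modulus smaller than 1. -/

import Mathlib

open Polynomial MeasureTheory ProbabilityTheory

/-- The number of complex roots, counted with multiplicity, of a real polynomial
with modulus smaller than `1`. -/
noncomputable def smallRootCount (q : Polynomial ℝ) : ℕ :=
  Multiset.card ((q.map (algebraMap ℝ ℂ)).roots.filter fun z => ‖z‖ < 1)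

/-- The random real polynomial `∑_{i=0}^{n} ω_i λ^i` built from coefficients `ω`. -/
noncomputable def polyOfCoeffs {n : ℕ} (ω : Fin (n + 1) → ℝ) : Polynomial ℝ :=
  ∑ i : Fin (n + 1), Polynomial.C (ω i) * Polynomial.X ^ (i : ℕ)

/-!
Reversing the coefficient vector preserves the law of `ω` and turns `Q` into its reciprocal
polynomial `λⁿ Q(1/λ)`, whose roots are the inverses of those of `Q`. So whenever `A₀ ≠ 0`,
`Aₙ ≠ 0` and `Q` has no root on the unit circle, `N⁰` of the reversed polynomial is `n - N⁰(Q)`.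
The exceptional coefficient vectors form a Lebesgue-null set, hence a null set for the Gaussian
law: a root on the unit circle means that `Q` is divisible by `λ ∓ 1` or by some `λ² - cλ + 1`,
and the multiples of these of degree at most `n` form the image of a smooth map from at most `n`
real parameters, which has Hausdorff dimension at most `n`.
-/

namespace Polynomial

variable {K : Type*} [Field K]

lemma reverse_X_sub_C {z : K} (hz : z ≠ 0) : (X - C z).reverse = C (-z) * (X - C z⁻¹) := by
  have hX : (X : K[X]).reverse = 1 := by
    rw [← mul_one X, reverse_X_mul]
    simpa using reverse_C (1 : K)
  rw [sub_eq_add_neg, ← C_neg, reverse_add_C, hX, natDegree_X, pow_one, mul_sub, ← C_mul,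
    neg_mul, mul_inv_cancel₀ hz]
  simp only [map_neg, map_one]
  ring

lemma reverse_multiset_prod_X_sub_C {s : Multiset K} (hs : (0 : K) ∉ s) :
    (s.map fun z => X - C z).prod.reverse
      = C (s.map Neg.neg).prod * (s.map fun z => X - C z⁻¹).prod := by
  induction s using Multiset.induction with
  | empty => simpa using reverse_C (1 : K)
  | cons a s ih =>
    rw [Multiset.mem_cons, not_or] at hs
    simp only [Multiset.map_cons, Multiset.prod_cons, reverse_mul_of_domain,
      reverse_X_sub_C (Ne.symm hs.1), ih hs.2, C_mul]
    ring

lemma roots_reverse {p : K[X]} (hsplit : Multiset.card p.roots = p.natDegree)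
    (h0 : p.coeff 0 ≠ 0) : p.reverse.roots = p.roots.map (·⁻¹) := by
  have hp : p ≠ 0 := fun h => h0 (by simp [h])
  have hs : (0 : K) ∉ p.roots := by
    rwa [mem_roots hp, IsRoot, ← coeff_zero_eq_eval_zero]
  have hprod : (p.roots.map Neg.neg).prod ≠ 0 :=
    Multiset.prod_ne_zero (by simpa using hs)
  conv_lhs => rw [← C_leadingCoeff_mul_prod_multiset_X_sub_C hsplit]
  rw [reverse_mul_of_domain, reverse_C, reverse_multiset_prod_X_sub_C hs, ← mul_assoc, ← C_mul,
    roots_C_mul _ (mul_ne_zero (leadingCoeff_ne_zero.2 hp) hprod)]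
  simpa [Multiset.map_map] using roots_multiset_prod_X_sub_C (p.roots.map (·⁻¹))

lemma dvd_of_isRoot_map_of_norm_eq_one {q : ℝ[X]} {z : ℂ}
    (hroot : (q.map (algebraMap ℝ ℂ)).IsRoot z) (hz : ‖z‖ = 1) :
    X - C 1 ∣ q ∨ X - C (-1) ∣ q ∨ ∃ c : ℝ, X ^ 2 - C c * X + 1 ∣ q := by
  by_cases him : z.im = 0
  · have hre : z = (z.re : ℂ) := Complex.ext rfl (by simpa using him)
    have hq : q.IsRoot z.re := by
      rw [hre] at hroot
      exact (isRoot_map_iff (algebraMap ℝ ℂ).injective).1 hroot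
    have habs : |z.re| = 1 := by rwa [hre, Complex.norm_real, Real.norm_eq_abs] at hz
    rcases abs_eq zero_le_one |>.1 habs with h | h
    · exact Or.inl (dvd_iff_isRoot.2 (h ▸ hq))
    · exact Or.inr (Or.inl (dvd_iff_isRoot.2 (h ▸ hq)))
  · have haeval : aeval z q = 0 := by rwa [IsRoot, eval_map_algebraMap] at hroot
    refine Or.inr (Or.inr ⟨2 * z.re, ?_⟩)
    simpa [hz] using quadratic_dvd_of_aeval_eq_zero_im_ne_zero q haeval him

end Polynomial

lemma smallRootCount_reverse_add {q : ℝ[X]} (h0 : q.coeff 0 ≠ 0)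
    (hcirc : ∀ z ∈ (q.map (algebraMap ℝ ℂ)).roots, ‖z‖ ≠ 1) :
    smallRootCount q.reverse + smallRootCount q = q.natDegree := by
  set Q := q.map (algebraMap ℝ ℂ)
  have hQ0 : Q.coeff 0 ≠ 0 := by simpa [Q, coeff_map] using h0
  have hQ : Q ≠ 0 := fun h => hQ0 (by simp [h])
  have hmap : q.reverse.map (algebraMap ℝ ℂ) = Q.reverse := by
    rw [reverse, reverse, ← reflect_map, natDegree_map]
  have hinv : ∀ z ∈ Q.roots, ‖z⁻¹‖ < 1 ↔ ¬ ‖z‖ < 1 := by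
    intro z hz
    have hz0 : z ≠ 0 := by
      rintro rfl
      exact hQ0 (by rwa [mem_roots hQ, IsRoot, ← coeff_zero_eq_eval_zero] at hz)
    rw [norm_inv, inv_lt_one₀ (norm_pos_iff.2 hz0), not_lt]
    exact ⟨le_of_lt, fun h => lt_of_le_of_ne h (hcirc z hz).symm⟩
  rw [← natDegree_map (algebraMap ℝ ℂ), ← IsAlgClosed.card_roots_eq_natDegree]
  unfold smallRootCount
  rw [hmap, roots_reverse IsAlgClosed.card_roots_eq_natDegree hQ0, Multiset.filter_map,
    Multiset.card_map, ← Multiset.card_add]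
  conv_rhs => rw [← Multiset.filter_add_not (fun z => ‖z‖ < 1) Q.roots]
  rw [add_comm]
  congr 2
  exact Multiset.filter_congr hinv

section polyOfCoeffs

variable {n : ℕ}

lemma polyOfCoeffs_eq_degreeLTEquiv_symm (ω : Fin (n + 1) → ℝ) :
    polyOfCoeffs ω = (degreeLTEquiv ℝ (n + 1)).symm ω := by
  simp [polyOfCoeffs, degreeLTEquiv, C_mul_X_pow_eq_monomial]

lemma coeff_polyOfCoeffs (ω : Fin (n + 1) → ℝ) (i : Fin (n + 1)) :
    (polyOfCoeffs ω).coeff i = ω i := by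
  rw [polyOfCoeffs_eq_degreeLTEquiv_symm]
  exact congrFun ((degreeLTEquiv ℝ (n + 1)).apply_symm_apply ω) i

lemma natDegree_polyOfCoeffs_le (ω : Fin (n + 1) → ℝ) : (polyOfCoeffs ω).natDegree ≤ n := by
  have h := mem_degreeLT.1 ((degreeLTEquiv ℝ (n + 1)).symm ω).2
  rw [← polyOfCoeffs_eq_degreeLTEquiv_symm] at h
  exact natDegree_le_iff_coeff_eq_zero.2 fun N hN =>
    coeff_eq_zero_of_degree_lt (h.trans_le (Nat.cast_le.2 hN))

lemma natDegree_polyOfCoeffs {ω : Fin (n + 1) → ℝ} (h : ω (Fin.last n) ≠ 0) :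
    (polyOfCoeffs ω).natDegree = n :=
  (natDegree_polyOfCoeffs_le ω).antisymm
    (le_natDegree_of_ne_zero (by simpa using (coeff_polyOfCoeffs ω (Fin.last n)).trans_ne h))

lemma polyOfCoeffs_comp_rev (ω : Fin (n + 1) → ℝ) :
    polyOfCoeffs (ω ∘ Fin.rev) = (polyOfCoeffs ω).reflect n := by
  ext j
  rw [coeff_reflect]
  obtain hj | hj := le_or_gt j n
  · rw [revAt_le hj]
    have hrev : Fin.rev ⟨j, by omega⟩ = (⟨n - j, by omega⟩ : Fin (n + 1)) := by
      ext; simp [Fin.val_rev]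
    exact (coeff_polyOfCoeffs (ω ∘ Fin.rev) ⟨j, by omega⟩).trans
      (by rw [Function.comp_apply, hrev, ← coeff_polyOfCoeffs ω])
  · rw [revAt_eq_self_of_lt hj,
      coeff_eq_zero_of_natDegree_lt ((natDegree_polyOfCoeffs_le _).trans_lt hj),
      coeff_eq_zero_of_natDegree_lt ((natDegree_polyOfCoeffs_le ω).trans_lt hj)]

end polyOfCoeffs

theorem MeasureTheory.Measure.AbsolutelyContinuous.pi_fin {m : ℕ} {α : Fin m → Type*}
    [∀ i, MeasurableSpace (α i)] {μ ν : ∀ i, Measure (α i)} [∀ i, SigmaFinite (μ i)]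
    [∀ i, SigmaFinite (ν i)] (h : ∀ i, μ i ≪ ν i) : Measure.pi μ ≪ Measure.pi ν := by
  induction m with
  | zero => rw [Measure.pi_of_empty, Measure.pi_of_empty]
  | succ m ih =>
    have hμ := (measurePreserving_piFinSuccAbove μ 0).symm
    have hν := (measurePreserving_piFinSuccAbove ν 0).symm
    rw [← hμ.map_eq, ← hν.map_eq]
    exact ((h 0).prod (ih fun i => h i.succ)).map (MeasurableEquiv.measurable _)

theorem volume_range_eq_zero_of_finrank_lt {E ι : Type*} [NormedAddCommGroup E]
    [NormedSpace ℝ E] [FiniteDimensional ℝ E] [Fintype ι] {f : E → ι → ℝ}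
    (hf : ContDiff ℝ 1 f) (h : Module.finrank ℝ E < Fintype.card ι) :
    volume (Set.range f) = 0 := by
  have hdim : dimH (Set.range f) < (Fintype.card ι : NNReal) :=
    hf.dimH_range_le.trans_lt (by exact_mod_cast h)
  have := hausdorffMeasure_of_dimH_lt hdim
  rwa [NNReal.coe_natCast, hausdorffMeasure_pi_real] at this

noncomputable def mulCoeffs (d : ℝ[X]) (m n : ℕ) : (Fin m → ℝ) →L[ℝ] Fin (n + 1) → ℝ :=
  LinearMap.toContinuousLinearMap <| LinearMap.pi (fun j => lcoeff ℝ j) ∘ₗ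
    LinearMap.mulLeft ℝ d ∘ₗ (degreeLT ℝ m).subtype ∘ₗ (degreeLTEquiv ℝ m).symm.toLinearMap

lemma mulCoeffs_apply (d : ℝ[X]) {m n : ℕ} (v : Fin m → ℝ) (j : Fin (n + 1)) :
    mulCoeffs d m n v j = (d * (degreeLTEquiv ℝ m).symm v).coeff j :=
  rfl

lemma mem_range_mulCoeffs {n m : ℕ} {ω : Fin (n + 1) → ℝ} {d r : ℝ[X]} (hd : d ≠ 0)
    (hm : n + 1 ≤ d.natDegree + m) (h : polyOfCoeffs ω = d * r) :
    ω ∈ Set.range (mulCoeffs d m n) := by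
  have hr : r ∈ degreeLT ℝ m := by
    rw [mem_degreeLT]
    rcases eq_or_ne r 0 with rfl | hr0
    · exact degree_zero.trans_lt (WithBot.bot_lt_coe _)
    have := natDegree_polyOfCoeffs_le ω
    rw [h, natDegree_mul hd hr0] at this
    exact degree_le_natDegree.trans_lt (Nat.cast_lt.2 (by omega))
  refine ⟨degreeLTEquiv ℝ m ⟨r, hr⟩, funext fun j => ?_⟩
  rw [mulCoeffs_apply, LinearEquiv.symm_apply_apply, ← h, coeff_polyOfCoeffs]

lemma volume_setOf_dvd_polyOfCoeffs (n : ℕ) {d : ℝ[X]} (hd : 0 < d.natDegree) :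
    volume {ω : Fin (n + 1) → ℝ | d ∣ polyOfCoeffs ω} = 0 := by
  refine measure_mono_null (fun ω ⟨r, hr⟩ => ?_) (volume_range_eq_zero_of_finrank_lt
    (mulCoeffs d (n + 1 - d.natDegree) n).contDiff (by simp; omega))
  exact mem_range_mulCoeffs (ne_zero_of_natDegree_gt hd) (by omega) hr

lemma volume_setOf_quadratic_dvd_polyOfCoeffs {n : ℕ} (hn : 1 ≤ n) :
    volume {ω : Fin (n + 1) → ℝ | ∃ c : ℝ, X ^ 2 - C c * X + 1 ∣ polyOfCoeffs ω} = 0 := by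
  let F : ℝ × (Fin (n - 1) → ℝ) → Fin (n + 1) → ℝ := fun p =>
    mulCoeffs (X ^ 2 + 1) (n - 1) n p.2 - p.1 • mulCoeffs X (n - 1) n p.2
  have hF : ContDiff ℝ 1 F := by fun_prop
  refine measure_mono_null (fun ω ⟨c, r, hr⟩ => ?_)
    (volume_range_eq_zero_of_finrank_lt hF (by simp; omega))
  have hdeg : (X ^ 2 - C c * X + 1 : ℝ[X]).natDegree = 2 := by compute_degree!
  obtain ⟨v, hv⟩ :=
    mem_range_mulCoeffs (m := n - 1) (by rintro h; simp [h] at hdeg) (by omega) hr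
  refine ⟨(c, v), funext fun j => ?_⟩
  rw [← hv]
  simp only [F, Pi.sub_apply, Pi.smul_apply, smul_eq_mul, mulCoeffs_apply]
  rw [sub_add_eq_add_sub, sub_mul, coeff_sub, mul_assoc, coeff_C_mul]

lemma ae_polyOfCoeffs_nondegenerate {n : ℕ} (hn : 1 ≤ n) :
    ∀ᵐ ω ∂(volume : Measure (Fin (n + 1) → ℝ)), ω 0 ≠ 0 ∧ ω (Fin.last n) ≠ 0 ∧
      ∀ z ∈ ((polyOfCoeffs ω).map (algebraMap ℝ ℂ)).roots, ‖z‖ ≠ 1 := by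
  have hcoord (i : Fin (n + 1)) : ∀ᵐ ω ∂(volume : Measure (Fin (n + 1) → ℝ)), ω i ≠ 0 := by
    rw [volume_pi, ae_iff]
    simp only [ne_eq, not_not]
    exact Measure.pi_eval_preimage_null (fun _ : Fin (n + 1) => (volume : Measure ℝ))
      (i := i) (measure_singleton 0)
  have hlinear (a : ℝ) :
      ∀ᵐ ω ∂(volume : Measure (Fin (n + 1) → ℝ)), ¬ X - C a ∣ polyOfCoeffs ω :=
    measure_eq_zero_iff_ae_notMem.1
      (volume_setOf_dvd_polyOfCoeffs n (by rw [natDegree_X_sub_C]; exact one_pos))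
  filter_upwards [hcoord 0, hcoord (Fin.last n), hlinear 1, hlinear (-1),
    measure_eq_zero_iff_ae_notMem.1 (volume_setOf_quadratic_dvd_polyOfCoeffs hn)]
    with ω h0 hlast h1 h2 h3
  refine ⟨h0, hlast, fun z hz hz1 => ?_⟩
  rcases dvd_of_isRoot_map_of_norm_eq_one (isRoot_of_mem_roots hz) hz1 with h | h | h
  exacts [h1 h, h2 h, h3 h]

/-- For a random real polynomial of degree `n ≥ 1` with i.i.d. standard normal
coefficients, `P(N⁰(Q) = k) = P(N⁰(Q) = n - k)` for every `0 ≤ k ≤ n`, where `N⁰` counts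
roots of modulus smaller than `1`. -/
theorem stmt_17 (n : ℕ) (hn : 1 ≤ n) (k : ℕ) (hk : k ≤ n) :
    (Measure.pi fun _ : Fin (n + 1) => gaussianReal 0 1)
        {ω | smallRootCount (polyOfCoeffs ω) = k}
      = (Measure.pi fun _ : Fin (n + 1) => gaussianReal 0 1)
        {ω | smallRootCount (polyOfCoeffs ω) = n - k} := by
  have hac : (Measure.pi fun _ : Fin (n + 1) => gaussianReal 0 1) ≪ volume := by
    rw [volume_pi]
    exact .pi_fin fun _ => gaussianReal_absolutelyContinuous 0 one_ne_zero
  let rev := MeasurableEquiv.arrowCongr' (Fin.revPerm (n := n + 1)) (MeasurableEquiv.refl ℝ)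
  have hrev : MeasurePreserving rev (Measure.pi fun _ => gaussianReal 0 1)
      (Measure.pi fun _ => gaussianReal 0 1) :=
    measurePreserving_arrowCongr' _ _ _ _ fun _ => .id _
  rw [← hrev.measure_preimage_equiv]
  refine measure_congr (Filter.eventuallyEq_set.2 (Filter.Eventually.mono
    (hac.ae_le (ae_polyOfCoeffs_nondegenerate hn)) fun ω ⟨h0, hlast, hcirc⟩ => ?_))
  have hcount := smallRootCount_reverse_add (by rwa [← coeff_polyOfCoeffs ω 0] at h0) hcirc
  have hω : polyOfCoeffs (rev ω) = (polyOfCoeffs ω).reverse := by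
    rw [reverse, natDegree_polyOfCoeffs hlast, ← polyOfCoeffs_comp_rev]
    rfl
  rw [natDegree_polyOfCoeffs hlast] at hcount
  simp only [Set.mem_preimage, Set.mem_ofPred_eq, hω]
  omega
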